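/- Let r ≥ 2 and let C be a Steiner system S(2,r,r²), i.e., an r-uniform hypergraph on a vertex set of size r² in which every pair of distinct vertices is contained in exactly one hyperedge. Then C contains no copy of B_4^r: there do not exist four distinct hyperedges e_1, e_2, e_3, f of C and a vertex v with v ∈ e_1 ∩ e_2 ∩ e_3, v ∉ f, f ∩ e_1 ≠ ∅, f ∩ e_2 = ∅, and f ∩ e_3 = ∅. -/

import Mathlib

/-!
Fix a vertex `v` of a Steiner system `S(2, r, r²)`. The lines through `v` cover each of the other
`r² - 1` vertices exactly once and each contributes `r - 1` of them, so there are at most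
`r + 1` of them. If `v ∉ f`, each point of `f` lies on its own line through `v`, giving `r` lines
through `v` that meet `f`; two further lines `e₂, e₃` through `v` missing `f` would make `r + 2`.
-/

open Finset

namespace Hypergraph

variable {V : Type*}

def IsLinear (E : Finset (Finset V)) : Prop :=
  ∀ e ∈ E, ∀ e' ∈ E, ∀ u w, u ≠ w → u ∈ e → w ∈ e → u ∈ e' → w ∈ e' → e = e'

variable {E : Finset (Finset V)}

theorem isLinear_of_existsUnique (h : ∀ u w : V, u ≠ w → ∃! e, e ∈ E ∧ u ∈ e ∧ w ∈ e) :
    IsLinear E := fun _ he _ he' u w huw hue hwe hue' hwe' =>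
  (h u w huw).unique ⟨he, hue, hwe⟩ ⟨he', hue', hwe'⟩

namespace IsLinear

variable [DecidableEq V]

theorem card_inter_le_one (hE : IsLinear E) {e f : Finset V} (he : e ∈ E) (hf : f ∈ E)
    {v : V} (hve : v ∈ e) (hvf : v ∉ f) : #(f ∩ e) ≤ 1 := by
  refine card_le_one.2 fun x hx y hy => by_contra fun hxy => hvf ?_
  simp only [mem_inter] at hx hy
  rwa [hE f hf e he x y hxy hx.1 hy.1 hx.2 hy.2]

theorem card_filter_mem_mul_le [Fintype V] (hE : IsLinear E) {r : ℕ}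
    (huniform : ∀ e ∈ E, #e = r) (v : V) :
    #(E.filter (v ∈ ·)) * (r - 1) ≤ Fintype.card V - 1 := by
  set L := E.filter (v ∈ ·)
  have hdisj : (L : Set (Finset V)).PairwiseDisjoint (·.erase v) := by
    intro e he e' he' hne
    simp only [coe_filter, Set.mem_ofPred_eq, L] at he he'
    refine disjoint_left.2 fun x hx hx' => hne ?_
    exact hE e he.1 e' he'.1 x v (ne_of_mem_erase hx) (mem_of_mem_erase hx) he.2
      (mem_of_mem_erase hx') he'.2
  calc #L * (r - 1) = #(L.biUnion (·.erase v)) := by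
        rw [card_biUnion hdisj, sum_const_nat]
        intro e he
        simp only [mem_filter, L] at he
        rw [card_erase_of_mem he.2, huniform e he.1]
    _ ≤ #(univ.erase v) := card_le_card fun x hx => by
        obtain ⟨e, -, hxe⟩ := mem_biUnion.1 hx
        exact mem_erase.2 ⟨ne_of_mem_erase hxe, mem_univ x⟩
    _ = Fintype.card V - 1 := by rw [card_erase_of_mem (mem_univ v), card_univ]

/-- Projecting `f` from a point `v ∉ f`: every point of `f` is joined to `v`, and no line through
`v` meets `f` twice. -/
theorem card_le_card_filter_meets (hE : IsLinear E) {f : Finset V} (hf : f ∈ E) {v : V}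
    (hvf : v ∉ f) (hjoin : ∀ x ∈ f, ∃ e ∈ E, v ∈ e ∧ x ∈ e) :
    #f ≤ #(E.filter fun e => v ∈ e ∧ (f ∩ e).Nonempty) := by
  set S := E.filter fun e => v ∈ e ∧ (f ∩ e).Nonempty
  have hcover : f ⊆ S.biUnion (f ∩ ·) := fun x hx => by
    obtain ⟨e, he, hve, hxe⟩ := hjoin x hx
    have hx' : x ∈ f ∩ e := mem_inter.2 ⟨hx, hxe⟩
    exact mem_biUnion.2 ⟨e, mem_filter.2 ⟨he, hve, x, hx'⟩, hx'⟩
  calc #f ≤ #(S.biUnion (f ∩ ·)) := card_le_card hcover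
    _ ≤ ∑ e ∈ S, #(f ∩ e) := card_biUnion_le
    _ ≤ ∑ _e ∈ S, 1 := sum_le_sum fun e he => by
        simp only [mem_filter, S] at he
        exact hE.card_inter_le_one he.1 hf he.2.1 hvf
    _ = #S := by rw [card_eq_sum_ones]

end IsLinear

end Hypergraph

open Hypergraph

/-- A Steiner system S(2,r,r²) contains no copy of B_4^r. -/
theorem stmt_9 {V : Type*} [Fintype V] [DecidableEq V]
    (r : ℕ) (hr : 2 ≤ r)
    (hcard : Fintype.card V = r ^ 2)
    (E : Finset (Finset V))
    (huniform : ∀ e ∈ E, e.card = r)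
    (hsteiner : ∀ u v : V, u ≠ v → ∃! e, e ∈ E ∧ u ∈ e ∧ v ∈ e) :
    ¬ ∃ e₁ ∈ E, ∃ e₂ ∈ E, ∃ e₃ ∈ E, ∃ f ∈ E, ∃ v : V,
      e₁ ≠ e₂ ∧ e₁ ≠ e₃ ∧ e₁ ≠ f ∧ e₂ ≠ e₃ ∧ e₂ ≠ f ∧ e₃ ≠ f ∧
      v ∈ e₁ ∧ v ∈ e₂ ∧ v ∈ e₃ ∧ v ∉ f ∧
      (f ∩ e₁).Nonempty ∧ f ∩ e₂ = ∅ ∧ f ∩ e₃ = ∅ := by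
  rintro ⟨-, -, e₂, he₂, e₃, he₃, f, hf, v, -, -, -, h23, -, -, -, hv2, hv3, hvf, -, hfe₂, hfe₃⟩
  have hE : IsLinear E := isLinear_of_existsUnique hsteiner
  set S := E.filter fun e => v ∈ e ∧ (f ∩ e).Nonempty
  have hjoin : ∀ x ∈ f, ∃ e ∈ E, v ∈ e ∧ x ∈ e := fun x hx =>
    (hsteiner v x fun h => hvf (h ▸ hx)).exists
  have hS : r ≤ #S := huniform f hf ▸ hE.card_le_card_filter_meets hf hvf hjoin
  have hsub : insert e₂ (insert e₃ S) ⊆ E.filter (v ∈ ·) := by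
    refine insert_subset (mem_filter.2 ⟨he₂, hv2⟩) (insert_subset (mem_filter.2 ⟨he₃, hv3⟩) ?_)
    exact monotone_filter_right E fun _ _ h => h.1
  have hstar : #S + 2 ≤ #(E.filter (v ∈ ·)) := by
    refine le_trans (le_of_eq ?_) (card_le_card hsub)
    rw [card_insert_of_notMem, card_insert_of_notMem]
    · simp [S, hfe₃]
    · simp [S, hfe₂, h23]
  have hbound := hE.card_filter_mem_mul_le huniform v
  rw [hcard] at hbound
  have key : (r + 2) * (r - 1) ≤ r ^ 2 - 1 :=
    le_trans (Nat.mul_le_mul_right _ (by omega)) hbound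
  have hr1 : 1 ≤ r := by omega
  have hr2 : 1 ≤ r ^ 2 := Nat.one_le_pow _ _ hr1
  zify [hr1, hr2] at key
  nlinarith
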